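/- arXiv:1711.04296 — 2 statements merged into one kernel-verified Lean document; each statement's English description precedes it below -/
import Mathlib

section
/- There exist a field K, a valuation ν on K[x] with trivial support, and a polynomial q ∈ K[x] such that ν = ν_q but q is not a key polynomial for ν. Concretely, if ν is the x-adic valuation on K[x] (extending a non-trivial valuation on K), then ν = ν_{x²} and q = x² is not a key polynomial for ν, since x² is reducible while key polynomials are irreducible. -/
open Polynomial

section KeyPolyDefs

variable {K : Type*} [Field K] {Γ : Type*} [AddCommGroup Γ] [LinearOrder Γ] [IsOrderedAddMonoid Γ]

/-- The value `ν f` read in `Γ` (junk value `0` when `ν f = ⊤`). -/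
noncomputable def aval (ν : AddValuation (Polynomial K) (WithTop Γ)) (f : Polynomial K) : Γ :=
  (ν f).untopD 0

/-- `ν` has trivial support: only `0` has value `⊤`. -/
def TrivialSupport (ν : AddValuation (Polynomial K) (WithTop Γ)) : Prop :=
  ∀ f : Polynomial K, ν f = ⊤ → f = 0

/-- The set of indices `r`, `1 ≤ r ≤ deg f` with `∂_r f ≠ 0`, over which `ε(f)` is computed. -/
noncomputable def epsSupport (f : Polynomial K) : Finset ℕ :=
  @Finset.filter _ (fun r => f.hasseDeriv r ≠ 0) (Classical.decPred _) (Finset.Icc 1 f.natDegree)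

/-- `ε(f) = max_{r ≥ 1} (ν f - ν ∂_r f) / r`, computed in the divisible group `Γ`. -/
noncomputable def eps [Module ℚ Γ] (ν : AddValuation (Polynomial K) (WithTop Γ))
    (f : Polynomial K) : Γ :=
  if h : (epsSupport f).Nonempty then
    (epsSupport f).sup' h fun r => ((r : ℚ)⁻¹) • (aval ν f - aval ν (f.hasseDeriv r))
  else 0

/-- `Q` is a key polynomial for `ν`: `Q` is monic and every `f` with `ε(f) ≥ ε(Q)` satisfies
`deg f ≥ deg Q`. -/
def IsKeyPoly [Module ℚ Γ] (ν : AddValuation (Polynomial K) (WithTop Γ))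
    (Q : Polynomial K) : Prop :=
  Q.Monic ∧ 0 < Q.natDegree ∧
    ∀ f : Polynomial K, 0 < f.natDegree → eps ν Q ≤ eps ν f → Q.natDegree ≤ f.natDegree

/-- The `i`-th coefficient of the `q`-expansion of a polynomial. -/
noncomputable def qCoeff (q : Polynomial K) : ℕ → Polynomial K → Polynomial K
  | 0, p => p % q
  | n + 1, p => qCoeff q n (p / q)

/-- The `q`-truncation `ν_q` of `ν`:  `ν_q(p) = min_i ν(p_i q^i)` where `p = Σ p_i q^i`
is the `q`-expansion of `p`. -/
noncomputable def trunc (ν : AddValuation (Polynomial K) (WithTop Γ)) (q p : Polynomial K) :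
    WithTop Γ :=
  (Finset.range (p.natDegree + 1)).inf fun i => ν (qCoeff q i p * q ^ i)

variable {L : Type*} [Field L] [Algebra K L]

/-- `δ(f)`: the maximal value `μ(x - a)` over the roots `a` of `f` in `L`
(junk value `0` if `f` has no roots in `L`). -/
noncomputable def delta (μ : AddValuation (Polynomial L) (WithTop Γ)) (f : Polynomial K) : Γ :=
  letI := Classical.decEq L
  if h : ((f.map (algebraMap K L)).roots.toFinset).Nonempty then
    ((f.map (algebraMap K L)).roots.toFinset).sup' h fun a => aval μ (X - C a)
  else 0

/-- `μ` on `L[x]` extends `ν` on `K[x]`. -/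
def IsExtension (μ : AddValuation (Polynomial L) (WithTop Γ))
    (ν : AddValuation (Polynomial K) (WithTop Γ)) : Prop :=
  ∀ f : Polynomial K, μ (f.map (algebraMap K L)) = ν f

/-- `w` on `K(x)` extends `ν` on `K[x]`. -/
def ExtendsToRatFunc (w : AddValuation (RatFunc K) (WithTop Γ))
    (ν : AddValuation (Polynomial K) (WithTop Γ)) : Prop :=
  ∀ p : Polynomial K, w (algebraMap (Polynomial K) (RatFunc K) p) = ν p

/-- The residue of `f` is transcendental over the residue field `Kν`:  every polynomial with
coefficients in the valuation ring of `K`, at least one of which is a unit, keeps value `0`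
when evaluated at `f`. -/
def ResidueTranscendentalElem (w : AddValuation (RatFunc K) (WithTop Γ)) (f : RatFunc K) : Prop :=
  ∀ (n : ℕ) (c : ℕ → K),
    (∀ i ≤ n, 0 ≤ w (algebraMap K (RatFunc K) (c i))) →
    (∃ i ≤ n, w (algebraMap K (RatFunc K) (c i)) = 0) →
    w (∑ i ∈ Finset.range (n + 1), algebraMap K (RatFunc K) (c i) * f ^ i) = 0

/-- The residue of `g` is algebraic over the residue field `Kν`: some polynomial with
coefficients in the valuation ring of `K`, at least one of which is a unit, gets positive
value when evaluated at `g`. -/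
def ResidueAlgebraicElem (w : AddValuation (RatFunc K) (WithTop Γ)) (g : RatFunc K) : Prop :=
  ∃ (n : ℕ) (c : ℕ → K),
    (∀ i ≤ n, 0 ≤ w (algebraMap K (RatFunc K) (c i))) ∧
    (∃ i ≤ n, w (algebraMap K (RatFunc K) (c i)) = 0) ∧
    0 < w (∑ i ∈ Finset.range (n + 1), algebraMap K (RatFunc K) (c i) * g ^ i)

/-- `w` is residue-transcendental: some `f` with `w f = 0` has transcendental residue. -/
def IsResidueTranscendental (w : AddValuation (RatFunc K) (WithTop Γ)) : Prop :=
  ∃ f : RatFunc K, w f = 0 ∧ ResidueTranscendentalElem w f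

/-- `w` is value-transcendental: some value `w f` is torsion-free over the value group
`νK` of `K`, i.e. `n ν(f) ∉ νK` for every `n ≥ 1`. -/
def IsValueTranscendental (w : AddValuation (RatFunc K) (WithTop Γ)) : Prop :=
  ∃ f : RatFunc K, f ≠ 0 ∧
    ∀ n : ℕ, 0 < n → ∀ c : K, c ≠ 0 → w (f ^ n) ≠ w (algebraMap K (RatFunc K) c)

/-- `w` is valuation-transcendental: it is value-transcendental or residue-transcendental. -/
def IsValuationTranscendental (w : AddValuation (RatFunc K) (WithTop Γ)) : Prop :=
  IsValueTranscendental w ∨ IsResidueTranscendental w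

end KeyPolyDefs

section MinimalPairDefs

variable {Γ : Type*} [AddCommGroup Γ] [LinearOrder Γ] [IsOrderedAddMonoid Γ] {L : Type*} [Field L]

/-- `(a, d)` is a minimal pair for the valuation (w.r.t. the extension `μ` to `L[x]`):
every `b` with `μ(b - a) ≥ d` satisfies `[K(b) : K] ≥ [K(a) : K]`. -/
def IsMinimalPair (K : Type*) [Field K] [Algebra K L]
    (μ : AddValuation (Polynomial L) (WithTop Γ)) (a : L) (d : Γ) : Prop :=
  ∀ b : L, (d : WithTop Γ) ≤ μ (C (b - a)) →
    (minpoly K a).natDegree ≤ (minpoly K b).natDegree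

/-- `(a, d)` is a minimal pair of definition: a minimal pair with `μ(x - a) = d ≥ μ(x - b)`
for every `b ∈ L`. -/
def IsMinimalPairOfDefinition (K : Type*) [Field K] [Algebra K L]
    (μ : AddValuation (Polynomial L) (WithTop Γ)) (a : L) (d : Γ) : Prop :=
  IsMinimalPair K μ a d ∧ μ (X - C a) = (d : WithTop Γ) ∧
    ∀ b : L, μ (X - C b) ≤ (d : WithTop Γ)

end MinimalPairDefs

/-! If `ν` is the `x`-adic valuation, `ν(p) = min_j ν(a_j x^j)`. Each term `p_i (x²)^i` of the
`x²`-expansion of `p` collects two monomials `a_j x^j` of `p`, so it has value at least `ν(p)`;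
together with `ν_q ≤ ν`, valid for every monic `q`, this gives `ν = ν_{x²}`.
On the other hand `ε(x²) ≤ ν(x) = ε(x)`: the term `r = 2` equals `ν(x²)/2 = ν(x)`, and the term
`r = 1` is `ν(x²) - ν(2x) ≤ ν(x)` because `ν(2) ≥ 0`. As `deg x < deg x²`, `x²` is not a key
polynomial. -/

section QExpansion

variable {K : Type*} [Field K]

theorem sum_qCoeff_mul_pow {q : K[X]} (hq : q.Monic) {n : ℕ} {p : K[X]}
    (hp : p.natDegree < q.natDegree * (n + 1)) :
    ∑ i ∈ Finset.range (n + 1), qCoeff q i p * q ^ i = p := by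
  induction n generalizing p with
  | zero =>
    rw [Finset.sum_range_one, pow_zero, mul_one]
    change p % q = p
    rw [← modByMonic_eq_mod p hq, modByMonic_eq_self_iff hq]
    exact degree_lt_degree (by simpa using hp)
  | succ n ih =>
    have hdiv : (p / q).natDegree < q.natDegree * (n + 1) := by
      rw [← divByMonic_eq_div p hq, natDegree_divByMonic p hq]
      have := Nat.le_mul_of_pos_right q.natDegree (by omega : 0 < n + 1)
      rw [mul_add_one q.natDegree (n + 1)] at hp
      omega
    rw [Finset.sum_range_succ', pow_zero, mul_one]
    simp_rw [pow_succ, ← mul_assoc, ← Finset.sum_mul]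
    change (∑ i ∈ Finset.range (n + 1), qCoeff q i (p / q) * q ^ i) * q + p % q = p
    rw [ih hdiv, EuclideanDomain.div_add_mod']

theorem trunc_le {Γ : Type*} [AddCommGroup Γ] [LinearOrder Γ] [IsOrderedAddMonoid Γ]
    (ν : AddValuation K[X] (WithTop Γ)) {q : K[X]} (hq : q.Monic) (hq0 : 0 < q.natDegree)
    (p : K[X]) : trunc ν q p ≤ ν p :=
  calc trunc ν q p
      ≤ ν (∑ i ∈ Finset.range (p.natDegree + 1), qCoeff q i p * q ^ i) :=
        ν.map_le_sum fun _ hi => Finset.inf_le hi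
    _ = ν p := by
        rw [sum_qCoeff_mul_pow hq (Nat.lt_of_lt_of_le p.natDegree.lt_succ_self
          (Nat.le_mul_of_pos_left _ hq0))]

theorem coeff_mod_X_pow (p : K[X]) (n j : ℕ) :
    (p % X ^ n).coeff j = if j < n then p.coeff j else 0 := by
  have hp := congrArg (coeff · j) (EuclideanDomain.div_add_mod p (X ^ n))
  simp only [coeff_add, coeff_X_pow_mul'] at hp
  split_ifs at hp ⊢ with hj hj'
  · omega
  · simpa using hp
  · rw [← modByMonic_eq_mod p (monic_X_pow n)]
    refine coeff_eq_zero_of_degree_lt ((degree_modByMonic_lt p (monic_X_pow n)).trans_le ?_)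
    rw [degree_X_pow]
    exact_mod_cast not_lt.1 hj
  · omega

theorem coeff_div_X_pow (p : K[X]) (n j : ℕ) : (p / X ^ n).coeff j = p.coeff (j + n) := by
  have hp := congrArg (coeff · (j + n)) (EuclideanDomain.div_add_mod p (X ^ n))
  simpa [coeff_X_pow_mul', coeff_mod_X_pow] using hp

theorem coeff_qCoeff_X_pow (n i : ℕ) (p : K[X]) (j : ℕ) :
    (qCoeff (X ^ n) i p).coeff j = if j < n then p.coeff (n * i + j) else 0 := by
  induction i generalizing p with
  | zero =>
    rw [mul_zero, zero_add]
    exact coeff_mod_X_pow p n j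
  | succ i ih =>
    change (qCoeff (X ^ n) i (p / X ^ n)).coeff j = _
    rw [ih, coeff_div_X_pow, show n * i + j + n = n * (i + 1) + j by ring]

theorem coeff_qCoeff_X_pow_mul (n i : ℕ) (p : K[X]) (j : ℕ) :
    (qCoeff (X ^ n) i p * (X ^ n) ^ i).coeff j =
      if n * i ≤ j ∧ j < n * i + n then p.coeff j else 0 := by
  rw [← pow_mul, coeff_mul_X_pow', coeff_qCoeff_X_pow]
  split_ifs <;> first | omega | rw [Nat.add_sub_cancel' ‹_›] | rfl

theorem qCoeff_X (i : ℕ) (p : K[X]) : qCoeff X i p = C (p.coeff i) := by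
  ext j
  rw [coeff_C, ← pow_one X, coeff_qCoeff_X_pow]
  split_ifs <;> first | omega | simp_all

end QExpansion

section XAdic

variable {K : Type*} [Field K] {Γ : Type*} [AddCommGroup Γ] [LinearOrder Γ]
  [IsOrderedAddMonoid Γ] {ν : AddValuation K[X] (WithTop Γ)}

theorem val_le_val_monomial_coeff (hxadic : ∀ p : K[X], ν p = trunc ν X p) (p : K[X]) (j : ℕ) :
    ν p ≤ ν (monomial j (p.coeff j)) := by
  rcases le_or_gt j p.natDegree with hj | hj
  · calc ν p = trunc ν X p := hxadic p
      _ ≤ ν (qCoeff X j p * X ^ j) := Finset.inf_le (Finset.mem_range_succ_iff.2 hj)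
      _ = ν (monomial j (p.coeff j)) := by rw [qCoeff_X, C_mul_X_pow_eq_monomial]
  · simp [coeff_eq_zero_of_natDegree_lt hj]

theorem val_le_val_of_coeff_eq_zero_or_eq (hxadic : ∀ p : K[X], ν p = trunc ν X p)
    {p g : K[X]} (hg : ∀ j, g.coeff j = 0 ∨ g.coeff j = p.coeff j) : ν p ≤ ν g := by
  rw [g.as_sum_support]
  refine ν.map_le_sum fun j hj => ?_
  rw [(hg j).resolve_left (mem_support_iff.1 hj)]
  exact val_le_val_monomial_coeff hxadic p j

theorem eq_trunc_X_pow_of_eq_trunc_X (hxadic : ∀ p : K[X], ν p = trunc ν X p) {n : ℕ}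
    (hn : 0 < n) (p : K[X]) : ν p = trunc ν (X ^ n) p := by
  refine le_antisymm (Finset.le_inf fun i _ => ?_)
    (trunc_le ν (monic_X_pow n) (by rwa [natDegree_X_pow]) p)
  refine val_le_val_of_coeff_eq_zero_or_eq hxadic fun j => ?_
  rw [coeff_qCoeff_X_pow_mul]
  split_ifs
  exacts [Or.inr rfl, Or.inl rfl]

end XAdic

section Eps

variable {K : Type*} [Field K] {Γ : Type*} [AddCommGroup Γ] [LinearOrder Γ]
  [IsOrderedAddMonoid Γ] (ν : AddValuation K[X] (WithTop Γ))

theorem aval_one : aval ν 1 = 0 := by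
  simp [aval]

theorem aval_pow (f : K[X]) (n : ℕ) : aval ν (f ^ n) = n • aval ν f := by
  cases n with
  | zero => simp [aval]
  | succ m =>
    cases h : ν f with
    | top => simp [aval, pow_succ, h]
    | coe a => simp [aval, ν.map_pow, h, ← WithTop.coe_nsmul]

theorem aval_le_aval_mul_of_isUnit {u : K[X]} (hu : IsUnit u) (hu0 : 0 ≤ ν u) (f : K[X]) :
    aval ν f ≤ aval ν (u * f) := by
  obtain ⟨v, hv⟩ := hu.exists_right_inv
  have hu_top : ν u ≠ ⊤ := fun h => by simpa [h] using congrArg ν hv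
  obtain ⟨b, hb⟩ := WithTop.ne_top_iff_exists.1 hu_top
  unfold aval
  rw [ν.map_mul, ← hb]
  rw [← hb, WithTop.coe_nonneg] at hu0
  cases ν f with
  | top => simp
  | coe a => exact le_add_of_nonneg_left hu0

variable [Module ℚ Γ]

theorem eps_X : eps ν X = aval ν X := by
  have hsupp : epsSupport (X : K[X]) = {1} := by
    simp [epsSupport, Finset.filter_singleton]
  rw [eps, dif_pos (hsupp ▸ Finset.singleton_nonempty 1), Finset.sup'_congr _ hsupp fun _ _ => rfl,
    Finset.sup'_singleton, hasseDeriv_one', derivative_X, aval_one]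
  simp

theorem eps_X_sq_le_eps_X : eps ν (X ^ 2) ≤ eps ν X := by
  have h2 : hasseDeriv 2 (X ^ 2 : K[X]) = 1 := by
    simp [X_pow_eq_monomial, hasseDeriv_monomial]
  rw [eps_X, eps, dif_pos ⟨2, by simp [epsSupport, h2]⟩]
  refine Finset.sup'_le _ _ fun r hr => ?_
  simp only [epsSupport, Finset.mem_filter, Finset.mem_Icc, natDegree_X_pow] at hr
  obtain ⟨⟨hr1, hr2⟩, hr0⟩ := hr
  interval_cases r
  · rw [hasseDeriv_one', derivative_X_sq] at hr0 ⊢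
    have h2_unit : IsUnit (C (2 : K)) := isUnit_C.2 (Ne.isUnit (by simpa using hr0))
    have h2_nonneg : 0 ≤ ν (C 2) := by
      simpa [← one_add_one_eq_two] using ν.map_add 1 1
    have := aval_le_aval_mul_of_isUnit ν h2_unit h2_nonneg X
    calc ((1 : ℕ) : ℚ)⁻¹ • (aval ν (X ^ 2) - aval ν (C 2 * X))
        = aval ν X + aval ν X - aval ν (C 2 * X) := by simp [aval_pow, two_nsmul]
      _ ≤ aval ν X + aval ν X - aval ν X := sub_le_sub_left this _
      _ = aval ν X := add_sub_cancel_right _ _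
  · rw [h2, aval_one, aval_pow,
      sub_zero, ← Nat.cast_smul_eq_nsmul ℚ, smul_smul]
    norm_num

theorem not_isKeyPoly_X_sq : ¬ IsKeyPoly ν (X ^ 2 : K[X]) := by
  rintro ⟨-, -, hkey⟩
  have := hkey X (by simp) (eps_X_sq_le_eps_X ν)
  simp at this

end Eps

theorem trunc_eq_xsq_not_keyPoly_general {K : Type*} [Field K] {Γ : Type*}
    [AddCommGroup Γ] [LinearOrder Γ] [IsOrderedAddMonoid Γ] [Module ℚ Γ]
    (ν : AddValuation (Polynomial K) (WithTop Γ))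
    (hxadic : ∀ p : Polynomial K, ν p = trunc ν X p) :
    (∀ p : Polynomial K, ν p = trunc ν (X ^ 2) p) ∧ ¬ IsKeyPoly ν (X ^ 2 : Polynomial K) :=
  ⟨eq_trunc_X_pow_of_eq_trunc_X hxadic two_pos, not_isKeyPoly_X_sq ν⟩

/-- If `ν` is the `x`-adic valuation on `K[x]` (extending a non-trivial
valuation on `K`), then `ν = ν_{x²}` although `q = x²` is not a key polynomial for `ν`.
In particular the property `ν = ν_q` does not characterize key polynomials. -/
theorem trunc_eq_xsq_not_keyPoly {K : Type*} [Field K] {Γ : Type*}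
    [AddCommGroup Γ] [LinearOrder Γ] [IsOrderedAddMonoid Γ] [Module ℚ Γ] [PosSMulStrictMono ℚ Γ] [PosSMulReflectLT ℚ Γ]
    (ν : AddValuation (Polynomial K) (WithTop Γ)) (hν : TrivialSupport ν)
    (hnontriv : ∃ c : K, c ≠ 0 ∧ ν (C c) ≠ 0)
    (hxadic : ∀ p : Polynomial K, ν p = trunc ν X p) :
    (∀ p : Polynomial K, ν p = trunc ν (X ^ 2) p) ∧ ¬ IsKeyPoly ν (X ^ 2 : Polynomial K) :=
  trunc_eq_xsq_not_keyPoly_general ν hxadic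
end

section
/- Let K be a field, ν a valuation on K[x] with trivial support, K̄ an algebraic closure of K, and μ an extension of ν to K̄[x]. Let Q, Q' be key polynomials for ν with ε(Q) < ε(Q'), and let a_Q, a_{Q'} ∈ K̄ be roots of Q, Q' respectively with μ(x−a_Q) = δ(Q) and μ(x−a_{Q'}) = δ(Q'). Then μ(a_{Q'} − a_Q) = min{μ(x−a_{Q'}), μ(x−a_Q)} = μ(x−a_Q) = ε(Q). -/
open Polynomial

/-!
Over an algebraically closed field a monic `f` is `∏ (x - a)` over its roots. Since
`∂_{r+1}((x - a) g) = (x - a) ∂_{r+1} g + ∂_r g`, induction on the roots gives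
`μ f ≤ μ (∂_r f) + r δ(f)` for every `r`, so every quotient in `ε(f)` is at most `δ(f)`. If exactly
`r₀` roots attain `μ(x - a) = δ(f)`, the Leibniz term of `∂_{r₀} f` that differentiates away
exactly these roots has strictly smaller value than all the others, so equality holds at `r₀` and
`ε(f) = δ(f)`. For key polynomials, `ε(Q) < ε(Q')` then says `μ(x - a_Q) < μ(x - a_{Q'})`, and
`a_{Q'} - a_Q = (x - a_Q) - (x - a_{Q'})` has value `μ(x - a_Q)` by the strict ultrametric
inequality.
-/

namespace Polynomial

theorem hasseDeriv_map {R S : Type*} [Semiring R] [Semiring S] (φ : R →+* S) (k : ℕ) (p : R[X]) :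
    hasseDeriv k (p.map φ) = (hasseDeriv k p).map φ := by
  ext n
  simp [hasseDeriv_coeff, coeff_map]

theorem hasseDeriv_succ_X_sub_C_mul {R : Type*} [CommRing R] (a : R) (p : R[X]) (k : ℕ) :
    hasseDeriv (k + 1) ((X - C a) * p) = (X - C a) * hasseDeriv (k + 1) p + hasseDeriv k p := by
  rw [hasseDeriv_mul, Finset.Nat.sum_antidiagonal_succ, Finset.sum_eq_single (0, k)]
  · simp
  · rintro ⟨_ | i, j⟩ hij hne
    · simp_all
    · rw [hasseDeriv_eq_zero_of_lt_natDegree _ _ ((natDegree_X_sub_C_le a).trans_lt (by omega)),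
        zero_mul]
  · simp

end Polynomial

namespace AddValuation

variable {R : Type*} [CommRing R] {Γ : Type*} [AddCommGroup Γ] [LinearOrder Γ]
  [IsOrderedAddMonoid Γ] (μ : AddValuation R[X] (WithTop Γ))

theorem map_prod_X_sub_C_ne_top {s : Multiset R} (h : ∀ a ∈ s, μ (X - C a) ≠ ⊤) :
    μ (s.map fun a => X - C a).prod ≠ ⊤ := by
  induction s using Multiset.induction with
  | empty => simp
  | cons a t ih =>
    rw [Multiset.forall_mem_cons] at h
    rw [Multiset.map_cons, Multiset.prod_cons, μ.map_mul]
    exact WithTop.add_ne_top.2 ⟨h.1, ih h.2⟩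

theorem map_prod_X_sub_C_of_forall_eq {s : Multiset R} {δ : Γ}
    (h : ∀ a ∈ s, μ (X - C a) = δ) :
    μ (s.map fun a => X - C a).prod = ↑(Multiset.card s • δ) := by
  induction s using Multiset.induction with
  | empty => simp
  | cons a t ih =>
    rw [Multiset.forall_mem_cons] at h
    rw [Multiset.map_cons, Multiset.prod_cons, μ.map_mul, h.1, ih h.2, Multiset.card_cons,
      succ_nsmul', WithTop.coe_add]

theorem min_le_map_hasseDeriv_succ_X_sub_C_mul (a : R) (p : R[X]) (k : ℕ) :
    min (μ (X - C a) + μ (hasseDeriv (k + 1) p)) (μ (hasseDeriv k p)) ≤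
      μ (hasseDeriv (k + 1) ((X - C a) * p)) := by
  rw [hasseDeriv_succ_X_sub_C_mul, ← μ.map_mul]
  exact μ.map_add _ _

theorem map_prod_X_sub_C_le_map_hasseDeriv_add {s : Multiset R} {δ : Γ}
    (h : ∀ a ∈ s, μ (X - C a) ≤ δ) (r : ℕ) :
    μ (s.map fun a => X - C a).prod ≤
      μ (hasseDeriv r (s.map fun a => X - C a).prod) + ↑(r • δ) := by
  induction s using Multiset.induction generalizing r with
  | empty =>
    rcases r with _ | k
    · simp
    · simp [hasseDeriv_apply_one]
  | cons a t ih =>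
    rw [Multiset.forall_mem_cons] at h
    rcases r with _ | k
    · simp
    set P := (t.map fun a => X - C a).prod
    rw [Multiset.map_cons, Multiset.prod_cons, μ.map_mul]
    calc μ (X - C a) + μ P
        ≤ min (μ (X - C a) + μ (hasseDeriv (k + 1) P) + ↑((k + 1) • δ))
            (μ (hasseDeriv k P) + ↑((k + 1) • δ)) := by
          refine le_min ?_ ?_
          · rw [add_assoc]
            exact add_le_add_right (ih h.2 _) _
          · rw [succ_nsmul', WithTop.coe_add, add_left_comm]
            exact add_le_add h.1 (ih h.2 k)
      _ = min (μ (X - C a) + μ (hasseDeriv (k + 1) P)) (μ (hasseDeriv k P)) + ↑((k + 1) • δ) :=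
          min_add_add_right _ _ _
      _ ≤ μ (hasseDeriv (k + 1) ((X - C a) * P)) + ↑((k + 1) • δ) :=
          add_le_add_left (μ.min_le_map_hasseDeriv_succ_X_sub_C_mul a P k) _

theorem map_prod_X_sub_C_lt_map_hasseDeriv_add {s : Multiset R} {δ : Γ}
    (h : ∀ a ∈ s, μ (X - C a) < δ) {r : ℕ} (hr : r ≠ 0) :
    μ (s.map fun a => X - C a).prod <
      μ (hasseDeriv r (s.map fun a => X - C a).prod) + ↑(r • δ) := by
  induction s using Multiset.induction generalizing r with
  | empty => simp [hasseDeriv_apply_one r (Nat.pos_of_ne_zero hr)]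
  | cons a t ih =>
    rw [Multiset.forall_mem_cons] at h
    obtain ⟨k, rfl⟩ := Nat.exists_eq_succ_of_ne_zero hr
    set P := (t.map fun a => X - C a).prod
    have hP : μ P ≠ ⊤ := μ.map_prod_X_sub_C_ne_top fun b hb => (h.2 b hb).ne_top
    rw [Multiset.map_cons, Multiset.prod_cons, μ.map_mul]
    refine lt_of_lt_of_le ?_ (add_le_add_left (μ.min_le_map_hasseDeriv_succ_X_sub_C_mul a P k) _)
    rw [← min_add_add_right]
    refine lt_min ?_ ?_
    · rw [add_assoc]
      exact WithTop.add_lt_add_left h.1.ne_top (ih h.2 k.succ_ne_zero)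
    · rw [succ_nsmul', WithTop.coe_add, add_left_comm]
      exact WithTop.add_lt_add_of_lt_of_le hP h.1
        (μ.map_prod_X_sub_C_le_map_hasseDeriv_add (fun b hb => (h.2 b hb).le) k)

open Finset.HasAntidiagonal in
theorem map_hasseDeriv_card_mul_prod [Nontrivial R] {s₁ s₂ : Multiset R} {δ : Γ}
    (h₁ : ∀ a ∈ s₁, μ (X - C a) = δ) (h₂ : ∀ a ∈ s₂, μ (X - C a) < δ) :
    μ (hasseDeriv (Multiset.card s₁)
        ((s₁.map fun a => X - C a).prod * (s₂.map fun a => X - C a).prod)) =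
      μ (s₂.map fun a => X - C a).prod := by
  set r₀ := Multiset.card s₁
  set P₁ := (s₁.map fun a => X - C a).prod
  set P₂ := (s₂.map fun a => X - C a).prod
  have hP₁ : μ P₁ = ↑(r₀ • δ) := μ.map_prod_X_sub_C_of_forall_eq h₁
  have hP₂ : μ P₂ ≠ ⊤ := μ.map_prod_X_sub_C_ne_top fun a ha => (h₂ a ha).ne_top
  have hlead : hasseDeriv r₀ P₁ = 1 := by
    have := hasseDeriv_natDegree_eq_C P₁
    rwa [natDegree_multiset_prod_X_sub_C_eq_card,
      (monic_multiset_prod_of_monic _ _ fun a _ => monic_X_sub_C a).leadingCoeff, C_1] at this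
  have hrest : ∀ ij ∈ (antidiagonal r₀).erase (r₀, 0),
      μ P₂ < μ (hasseDeriv ij.1 P₁ * hasseDeriv ij.2 P₂) := by
    rintro ⟨i, j⟩ hij
    obtain ⟨hne, hij⟩ := Finset.mem_erase.1 hij
    rw [mem_antidiagonal] at hij
    have hj : j ≠ 0 := by rintro rfl; simp_all
    rw [μ.map_mul, ← WithTop.add_lt_add_iff_left (WithTop.coe_ne_top (a := r₀ • δ))]
    calc ↑(r₀ • δ) + μ P₂
        < (μ (hasseDeriv i P₁) + ↑(i • δ)) + (μ (hasseDeriv j P₂) + ↑(j • δ)) :=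
          WithTop.add_lt_add_of_le_of_lt (hP₁ ▸ WithTop.coe_ne_top)
            (hP₁ ▸ μ.map_prod_X_sub_C_le_map_hasseDeriv_add (fun a ha => (h₁ a ha).le) i)
            (μ.map_prod_X_sub_C_lt_map_hasseDeriv_add h₂ hj)
      _ = ↑(r₀ • δ) + (μ (hasseDeriv i P₁) + μ (hasseDeriv j P₂)) := by
          rw [← hij, add_nsmul, WithTop.coe_add]
          ac_rfl
  rw [hasseDeriv_mul, ← Finset.add_sum_erase _ _ (by simp : (r₀, 0) ∈ antidiagonal r₀),
    hlead, hasseDeriv_zero', one_mul]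
  exact μ.map_add_eq_of_lt_left (μ.map_sum_lt hP₂ hrest)

theorem exists_map_prod_X_sub_C_eq_map_hasseDeriv_add [Nontrivial R] {s : Multiset R} {δ : Γ}
    (hle : ∀ a ∈ s, μ (X - C a) ≤ δ) (hδ : ∃ a ∈ s, μ (X - C a) = δ) :
    ∃ r₀ ≠ 0, μ (hasseDeriv r₀ (s.map fun a => X - C a).prod) ≠ ⊤ ∧
      μ (s.map fun a => X - C a).prod =
        μ (hasseDeriv r₀ (s.map fun a => X - C a).prod) + ↑(r₀ • δ) := by
  classical
  set s₁ := s.filter fun a => μ (X - C a) = δ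
  set s₂ := s.filter fun a => ¬μ (X - C a) = δ
  have h₁ : ∀ a ∈ s₁, μ (X - C a) = δ := fun a ha => (Multiset.mem_filter.1 ha).2
  have h₂ : ∀ a ∈ s₂, μ (X - C a) < δ := fun a ha =>
    (hle a (Multiset.mem_filter.1 ha).1).lt_of_ne (Multiset.mem_filter.1 ha).2
  have hprod : (s.map fun a => X - C a).prod =
      (s₁.map fun a => X - C a).prod * (s₂.map fun a => X - C a).prod := by
    rw [← Multiset.prod_add, ← Multiset.map_add, Multiset.filter_add_not]
  obtain ⟨a, ha, haδ⟩ := hδ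
  refine ⟨Multiset.card s₁, (Multiset.card_pos_iff_exists_mem.2
    ⟨a, Multiset.mem_filter.2 ⟨ha, haδ⟩⟩).ne', ?_, ?_⟩
  · rw [hprod, μ.map_hasseDeriv_card_mul_prod h₁ h₂]
    exact μ.map_prod_X_sub_C_ne_top fun a ha => (h₂ a ha).ne_top
  · rw [hprod, μ.map_hasseDeriv_card_mul_prod h₁ h₂, μ.map_mul,
      μ.map_prod_X_sub_C_of_forall_eq h₁, add_comm]

end AddValuation

theorem inv_natCast_smul_le_iff {Γ : Type*} [AddCommGroup Γ] [LinearOrder Γ]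
    [IsOrderedAddMonoid Γ] [Module ℚ Γ] {r : ℕ} (hr : r ≠ 0) {x d : Γ} :
    (r : ℚ)⁻¹ • x ≤ d ↔ x ≤ r • d := by
  conv_rhs => rw [← smul_inv_smul₀ (Nat.cast_ne_zero.2 hr : (r : ℚ) ≠ 0) x, Nat.cast_smul_eq_nsmul]
  exact (nsmul_le_nsmul_iff_right hr).symm

section EpsDelta

variable {K : Type*} [Field K] {Γ : Type*} [AddCommGroup Γ] [LinearOrder Γ] [IsOrderedAddMonoid Γ]

theorem coe_aval {ν : AddValuation K[X] (WithTop Γ)} (hν : TrivialSupport ν) {p : K[X]}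
    (hp : p ≠ 0) : ((aval ν p : Γ) : WithTop Γ) = ν p := by
  obtain ⟨x, hx⟩ := WithTop.ne_top_iff_exists.1 (mt (hν p) hp)
  simp [aval, ← hx]

theorem eps_eq_of_forall_le_of_eq [Module ℚ Γ] {ν : AddValuation K[X] (WithTop Γ)}
    (hν : TrivialSupport ν) {f : K[X]} {d : Γ}
    (hle : ∀ r, ν f ≤ ν (f.hasseDeriv r) + ↑(r • d)) {r₀ : ℕ} (hr₀ : r₀ ≠ 0)
    (hf₀ : f.hasseDeriv r₀ ≠ 0) (heq : ν f = ν (f.hasseDeriv r₀) + ↑(r₀ • d)) :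
    eps ν f = d := by
  have hf : f ≠ 0 := by rintro rfl; exact hf₀ (map_zero _)
  have hmem : r₀ ∈ epsSupport f := by
    simp only [epsSupport, Finset.mem_filter, Finset.mem_Icc]
    exact ⟨⟨Nat.one_le_iff_ne_zero.2 hr₀,
      not_lt.1 (mt (hasseDeriv_eq_zero_of_lt_natDegree f r₀) hf₀)⟩, hf₀⟩
  rw [eps, dif_pos ⟨r₀, hmem⟩]
  refine le_antisymm (Finset.sup'_le _ _ fun r hr => ?_) (Finset.le_sup'_of_le _ hmem ?_)
  · simp only [epsSupport, Finset.mem_filter, Finset.mem_Icc] at hr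
    have hler := hle r
    rw [← coe_aval hν hf, ← coe_aval hν hr.2, ← WithTop.coe_add, WithTop.coe_le_coe] at hler
    rw [inv_natCast_smul_le_iff (by omega)]
    exact sub_le_iff_le_add'.2 hler
  · rw [← coe_aval hν hf, ← coe_aval hν hf₀, ← WithTop.coe_add, WithTop.coe_inj] at heq
    rw [heq, add_sub_cancel_left, ← Nat.cast_smul_eq_nsmul ℚ,
      inv_smul_smul₀ (Nat.cast_ne_zero.2 hr₀)]

variable {L : Type*} [Field L] [Algebra K L] {μ : AddValuation L[X] (WithTop Γ)}

theorem map_X_sub_C_le_delta (hμ : TrivialSupport μ) {f : K[X]} {a : L}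
    (ha : a ∈ (f.map (algebraMap K L)).roots) : μ (X - C a) ≤ delta μ f := by
  classical
  rw [delta, dif_pos ⟨a, Multiset.mem_toFinset.2 ha⟩, ← coe_aval hμ (X_sub_C_ne_zero a),
    WithTop.coe_le_coe]
  exact Finset.le_sup' (fun a => aval μ (X - C a)) (Multiset.mem_toFinset.2 ha)

theorem exists_map_X_sub_C_eq_delta (hμ : TrivialSupport μ) {f : K[X]}
    (hf : (f.map (algebraMap K L)).roots ≠ 0) :
    ∃ a ∈ (f.map (algebraMap K L)).roots, μ (X - C a) = delta μ f := by
  classical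
  have hne := Multiset.toFinset_nonempty.2 hf
  obtain ⟨a, ha, hmax⟩ := Finset.exists_mem_eq_sup' hne fun a => aval μ (X - C a)
  refine ⟨a, Multiset.mem_toFinset.1 ha, ?_⟩
  rw [delta, dif_pos hne, hmax, coe_aval hμ (X_sub_C_ne_zero a)]

theorem eps_eq_delta [Module ℚ Γ] {ν : AddValuation K[X] (WithTop Γ)} (hν : TrivialSupport ν)
    (hμ : TrivialSupport μ) (hext : IsExtension μ ν) {f : K[X]} (hf : f.Monic)
    (hdeg : f.natDegree ≠ 0) (hsplit : (f.map (algebraMap K L)).Splits) :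
    eps ν f = delta μ f := by
  set s := (f.map (algebraMap K L)).roots
  have hprod : f.map (algebraMap K L) = (s.map fun a => X - C a).prod :=
    hsplit.eq_prod_roots_of_monic (hf.map _)
  have hval : ∀ r, ν (f.hasseDeriv r) = μ (hasseDeriv r (s.map fun a => X - C a).prod) := by
    intro r
    rw [← hext, ← hasseDeriv_map, hprod]
  have hval₀ : ν f = μ (s.map fun a => X - C a).prod := by simpa using hval 0
  have hle : ∀ a ∈ s, μ (X - C a) ≤ delta μ f := fun a ha => map_X_sub_C_le_delta hμ ha
  obtain ⟨r₀, hr₀, hfin, heq⟩ := μ.exists_map_prod_X_sub_C_eq_map_hasseDeriv_add hle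
    (exists_map_X_sub_C_eq_delta hμ (hsplit.roots_ne_zero (by rwa [natDegree_map])))
  refine eps_eq_of_forall_le_of_eq hν (fun r => ?_) hr₀ ?_ ?_
  · rw [hval₀, hval]
    exact μ.map_prod_X_sub_C_le_map_hasseDeriv_add hle r
  · exact fun h => hfin (by rw [← hval, h, ν.map_zero])
  · rwa [hval₀, hval]

end EpsDelta

theorem value_sub_roots_of_keyPolys_general {K : Type*} [Field K] {Γ : Type*}
    [AddCommGroup Γ] [LinearOrder Γ] [IsOrderedAddMonoid Γ] [Module ℚ Γ]
    {L : Type*} [Field L] [Algebra K L] [IsAlgClosure K L]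
    (ν : AddValuation (Polynomial K) (WithTop Γ)) (μ : AddValuation (Polynomial L) (WithTop Γ))
    (hν : TrivialSupport ν) (hμ : TrivialSupport μ) (hext : IsExtension μ ν)
    (Q Q' : Polynomial K) (hQ : IsKeyPoly ν Q) (hQ' : IsKeyPoly ν Q')
    (heps : eps ν Q < eps ν Q')
    (aQ aQ' : L)
    (hmaxQ : μ (X - C aQ) = ((delta μ Q : Γ) : WithTop Γ))
    (hmaxQ' : μ (X - C aQ') = ((delta μ Q' : Γ) : WithTop Γ)) :
    μ (C aQ' - C aQ) = min (μ (X - C aQ')) (μ (X - C aQ)) ∧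
      μ (C aQ' - C aQ) = μ (X - C aQ) ∧
      μ (X - C aQ) = ((eps ν Q : Γ) : WithTop Γ) := by
  have : IsAlgClosed L := IsAlgClosure.isAlgClosed K
  have hδ : ∀ {P : K[X]}, IsKeyPoly ν P → eps ν P = delta μ P := fun hP =>
    eps_eq_delta hν hμ hext hP.1 hP.2.1.ne' (IsAlgClosed.splits _)
  have hlt : μ (X - C aQ) < μ (X - C aQ') := by
    rw [hmaxQ, hmaxQ', ← hδ hQ, ← hδ hQ']
    exact WithTop.coe_lt_coe.2 heps
  have hdiff : μ (C aQ' - C aQ) = μ (X - C aQ) := by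
    rw [show C aQ' - C aQ = (X - C aQ) - (X - C aQ') by ring]
    exact μ.map_sub_eq_of_lt_left hlt
  exact ⟨by rw [hdiff, min_eq_right hlt.le], hdiff, by rw [hmaxQ, hδ hQ]⟩

/-- If `Q, Q'` are key polynomials for `ν` with `ε(Q) < ε(Q')` and
`a_Q, a_{Q'}` are roots of `Q, Q'` with `μ(x - a_Q) = δ(Q)`, `μ(x - a_{Q'}) = δ(Q')`, then
`μ(a_{Q'} - a_Q) = min{μ(x - a_{Q'}), μ(x - a_Q)} = μ(x - a_Q) = ε(Q)`. -/
theorem value_sub_roots_of_keyPolys {K : Type*} [Field K] {Γ : Type*}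
    [AddCommGroup Γ] [LinearOrder Γ] [IsOrderedAddMonoid Γ] [Module ℚ Γ] [PosSMulStrictMono ℚ Γ] [PosSMulReflectLT ℚ Γ]
    {L : Type*} [Field L] [Algebra K L] [IsAlgClosure K L]
    (ν : AddValuation (Polynomial K) (WithTop Γ)) (μ : AddValuation (Polynomial L) (WithTop Γ))
    (hν : TrivialSupport ν) (hμ : TrivialSupport μ) (hext : IsExtension μ ν)
    (Q Q' : Polynomial K) (hQ : IsKeyPoly ν Q) (hQ' : IsKeyPoly ν Q')
    (heps : eps ν Q < eps ν Q')
    (aQ aQ' : L) (haQ : Polynomial.aeval aQ Q = 0) (haQ' : Polynomial.aeval aQ' Q' = 0)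
    (hmaxQ : μ (X - C aQ) = ((delta μ Q : Γ) : WithTop Γ))
    (hmaxQ' : μ (X - C aQ') = ((delta μ Q' : Γ) : WithTop Γ)) :
    μ (C aQ' - C aQ) = min (μ (X - C aQ')) (μ (X - C aQ)) ∧
      μ (C aQ' - C aQ) = μ (X - C aQ) ∧
      μ (X - C aQ) = ((eps ν Q : Γ) : WithTop Γ) :=
  value_sub_roots_of_keyPolys_general ν μ hν hμ hext Q Q' hQ hQ' heps aQ aQ' hmaxQ hmaxQ'
end
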